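/- Let X be a finite indecomposable quandle such that [G_X, G_X] acts freely (hence regularly) on X. Then every 2-cocycle q : X × X → A with values in an abelian group A (trivial action) is cohomologous to a constant cocycle; equivalently H²(X, ℂˣ) ≅ ℂˣ. -/

import Mathlib

/-!
Extend `q` to the enveloping group: the cocycle identity says exactly that `x ↦ (q x, x ◃ ·)`
is a quandle map into `Conj (Wreath X A)`, where `Wreath X A = (X → A) ⋊ Perm X`, so it induces
a homomorphism `Φ` on `G_X`, and `c g := (Φ g).fn x₀` satisfies `c (g h) = (Φ g).fn (h • x₀) + c h`.
Indecomposability makes all generators equal in `G_X / [G_X, G_X]`, so the kernel of the degree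
map `G_X → ℤ` is `[G_X, G_X]`. Freeness then forces the stabilizer of `x₀` to be `⟨e_{x₀}⟩`,
on which `c` is `d ↦ d • q x₀ x₀`. Hence `g ↦ c g - deg g • q x₀ x₀` is constant on the cosets
of the stabilizer and descends to `γ : X → A`, which trivializes `q - q x₀ x₀`.
-/

open Rack Quandles

@[ext]
structure Wreath (X : Type*) (A : Type*) where
  fn : X → A
  perm : Equiv.Perm X

namespace Wreath

variable {X : Type*} {A : Type*} [AddCommGroup A]

instance : Mul (Wreath X A) := ⟨fun w v => ⟨fun z => w.fn (v.perm z) + v.fn z, w.perm * v.perm⟩⟩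

instance : One (Wreath X A) := ⟨⟨0, 1⟩⟩

instance : Inv (Wreath X A) := ⟨fun w => ⟨fun z => -w.fn (w.perm⁻¹ z), w.perm⁻¹⟩⟩

@[simp] lemma mul_fn (w v : Wreath X A) (z : X) : (w * v).fn z = w.fn (v.perm z) + v.fn z := rfl
@[simp] lemma mul_perm (w v : Wreath X A) : (w * v).perm = w.perm * v.perm := rfl
@[simp] lemma one_fn (z : X) : (1 : Wreath X A).fn z = 0 := rfl
@[simp] lemma one_perm : (1 : Wreath X A).perm = 1 := rfl
@[simp] lemma inv_fn (w : Wreath X A) (z : X) : w⁻¹.fn z = -w.fn (w.perm⁻¹ z) := rfl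
@[simp] lemma inv_perm (w : Wreath X A) : w⁻¹.perm = w.perm⁻¹ := rfl

instance : Group (Wreath X A) where
  mul_assoc a b c := by ext <;> simp [add_assoc, mul_assoc]
  one_mul a := by ext <;> simp
  mul_one a := by ext <;> simp
  inv_mul_cancel a := by ext <;> simp

def permHom : Wreath X A →* Equiv.Perm X where
  toFun := perm
  map_one' := rfl
  map_mul' _ _ := rfl

lemma zpow_fn_of_perm_eq {w : Wreath X A} {z : X} (hz : w.perm z = z) (n : ℤ) :
    (w ^ n).fn z = n • w.fn z := by
  have hz' : w.perm⁻¹ z = z := Equiv.Perm.inv_eq_iff_eq.2 hz.symm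
  induction n using Int.induction_on with
  | zero => simp
  | succ n ih => rw [zpow_add_one, mul_fn, hz, ih, add_zsmul, one_zsmul]
  | pred n ih =>
    rw [zpow_sub_one, mul_fn, inv_perm, hz', inv_fn, hz', ih, sub_zsmul, one_zsmul]

end Wreath

lemma exists_forall_eq_of_stabilizer_invariant {G X B : Type*} [Group G]
    (ρ : G →* Equiv.Perm X) (x₀ : X) (htrans : ∀ y, ∃ g, ρ g x₀ = y) (f : G → B)
    (hf : ∀ g s, ρ s x₀ = x₀ → f (g * s) = f g) :
    ∃ γ : X → B, ∀ g, γ (ρ g x₀) = f g := by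
  choose k hk using htrans
  refine ⟨f ∘ k, fun g => ?_⟩
  have hfix : ρ (g⁻¹ * k (ρ g x₀)) x₀ = x₀ := by
    rw [map_mul, Equiv.Perm.mul_apply, hk, map_inv, Equiv.Perm.inv_eq_iff_eq]
  rw [← hf g _ hfix, mul_inv_cancel_left, Function.comp_apply]

namespace Rack

lemma closure_range_toEnvelGroup (R : Type*) [Rack R] :
    Subgroup.closure (Set.range (toEnvelGroup R)) = ⊤ := by
  refine eq_top_iff.2 fun g _ => Quotient.inductionOn g fun p => ?_
  induction p with
  | unit => exact one_mem _
  | incl x => exact Subgroup.subset_closure ⟨x, rfl⟩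
  | mul a b ha hb => exact mul_mem ha hb
  | inv a ha => exact inv_mem ha

lemma EnvelGroup.hom_ext {R : Type*} [Rack R] {G : Type*} [Group G] {F₁ F₂ : EnvelGroup R →* G}
    (h : ∀ x, F₁ (toEnvelGroup R x) = F₂ (toEnvelGroup R x)) : F₁ = F₂ :=
  MonoidHom.eq_of_eqOn_dense (closure_range_toEnvelGroup R) (by rintro _ ⟨x, rfl⟩; exact h x)

lemma toEnvelGroup_envelAction {R : Type*} [Rack R] (g : EnvelGroup R) (x : R) :
    toEnvelGroup R (envelAction g x) = g * toEnvelGroup R x * g⁻¹ := by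
  have hg : g ∈ Subgroup.closure (Set.range (toEnvelGroup R)) := by
    rw [closure_range_toEnvelGroup]; trivial
  induction hg using Subgroup.closure_induction generalizing x with
  | mem _ hw =>
    obtain ⟨y, rfl⟩ := hw
    exact (toEnvelGroup R).map_act'
  | one => simp
  | mul a b _ _ iha ihb =>
    rw [map_mul, Equiv.Perm.mul_apply, iha, ihb]
    group
  | inv a _ iha =>
    have h := iha (envelAction a⁻¹ x)
    rw [map_inv, ← Equiv.Perm.mul_apply, mul_inv_cancel, Equiv.Perm.one_apply] at h
    rw [map_inv, h]
    group

def envelDegree (R : Type*) [Rack R] : EnvelGroup R →* Multiplicative ℤ :=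
  toEnvelGroup.map
    { toFun := fun _ => Multiplicative.ofAdd 1
      map_act' := by
        intro x y
        rw [Quandle.conj_act_eq_conj, mul_comm, inv_mul_cancel_left] }

@[simp]
lemma envelDegree_toEnvelGroup {R : Type*} [Rack R] (x : R) :
    envelDegree R (toEnvelGroup R x) = Multiplicative.ofAdd 1 := rfl

lemma mem_commutator_of_envelDegree_eq_one {R : Type*} [Rack R] (x₀ : R)
    (htrans : ∀ y : R, ∃ g : EnvelGroup R, envelAction g x₀ = y)
    {g : EnvelGroup R} (hg : envelDegree R g = 1) : g ∈ commutator (EnvelGroup R) := by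
  let π : EnvelGroup R →* Abelianization (EnvelGroup R) := Abelianization.of
  have hgen (x : R) : π (toEnvelGroup R x) = π (toEnvelGroup R x₀) := by
    obtain ⟨h, rfl⟩ := htrans x
    rw [toEnvelGroup_envelAction, map_mul, map_mul, map_inv, mul_comm, inv_mul_cancel_left]
  have hπ : (zpowersHom _ (π (toEnvelGroup R x₀))).comp (envelDegree R) = π :=
    EnvelGroup.hom_ext fun x => by simp [hgen x]
  have hπg : π g = 1 := by rw [← hπ, MonoidHom.comp_apply, hg, map_one]
  exact (QuotientGroup.eq_one_iff g).1 hπg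

lemma eq_zpow_envelDegree_of_fixed {R : Type*} [Quandle R] (x₀ : R)
    (htrans : ∀ y : R, ∃ g : EnvelGroup R, envelAction g x₀ = y)
    (hfree : ∀ n ∈ commutator (EnvelGroup R), (∃ y : R, envelAction n y = y) → n = 1)
    {s : EnvelGroup R} (hs : envelAction s x₀ = x₀) :
    s = toEnvelGroup R x₀ ^ Multiplicative.toAdd (envelDegree R s) := by
  set e := toEnvelGroup R x₀
  have he : envelAction e x₀ = x₀ := Quandle.fix
  have hdeg : envelDegree R (s * (e ^ Multiplicative.toAdd (envelDegree R s))⁻¹) = 1 := by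
    simp [e, ← ofAdd_zsmul]
  refine mul_inv_eq_one.1 (hfree _ (mem_commutator_of_envelDegree_eq_one x₀ htrans hdeg) ⟨x₀, ?_⟩)
  rw [← zpow_neg, map_mul, map_zpow, Equiv.Perm.mul_apply,
    Equiv.Perm.zpow_apply_eq_self_of_apply_eq_self he, hs]

def IsCocycle {X A : Type*} [Shelf X] [AddCommGroup A] (q : X → X → A) : Prop :=
  ∀ x y z : X, q (x ◃ y) (x ◃ z) + q x z = q x (y ◃ z) + q y z

section Cocycle

variable {X A : Type*} [Rack X] [AddCommGroup A] {q : X → X → A}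

def cocycleShelfHom (hq : IsCocycle q) : X →◃ Quandle.Conj (Wreath X A) where
  toFun x := ⟨q x, act' x⟩
  map_act' := by
    intro x y
    rw [Quandle.conj_act_eq_conj, eq_mul_inv_iff_mul_eq]
    ext z
    · simpa using hq x y z
    · simpa using (Shelf.self_distrib (x := x) (y := y) (z := z)).symm

def cocycleLift (hq : IsCocycle q) : EnvelGroup X →* Wreath X A :=
  toEnvelGroup.map (cocycleShelfHom hq)

lemma cocycleLift_toEnvelGroup (hq : IsCocycle q) (x : X) :
    cocycleLift hq (toEnvelGroup X x) = ⟨q x, act' x⟩ := rfl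

lemma cocycleLift_perm (hq : IsCocycle q) (g : EnvelGroup X) :
    (cocycleLift hq g).perm = envelAction g :=
  DFunLike.congr_fun (EnvelGroup.hom_ext (F₁ := Wreath.permHom.comp (cocycleLift hq))
    (F₂ := envelAction) fun _ => rfl) g

lemma cocycleLift_mul_fn (hq : IsCocycle q) (g h : EnvelGroup X) (z : X) :
    (cocycleLift hq (g * h)).fn z =
      (cocycleLift hq g).fn (envelAction h z) + (cocycleLift hq h).fn z := by
  rw [map_mul, Wreath.mul_fn, cocycleLift_perm]

end Cocycle

lemma cocycleLift_fn_of_fixed {X A : Type*} [Quandle X] [AddCommGroup A] {q : X → X → A}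
    (hq : IsCocycle q) (x₀ : X) (htrans : ∀ y : X, ∃ g : EnvelGroup X, envelAction g x₀ = y)
    (hfree : ∀ n ∈ commutator (EnvelGroup X), (∃ y : X, envelAction n y = y) → n = 1)
    {s : EnvelGroup X} (hs : envelAction s x₀ = x₀) :
    (cocycleLift hq s).fn x₀ = Multiplicative.toAdd (envelDegree X s) • q x₀ x₀ := by
  conv_lhs => rw [eq_zpow_envelDegree_of_fixed x₀ htrans hfree hs]
  rw [map_zpow, Wreath.zpow_fn_of_perm_eq Quandle.fix, cocycleLift_toEnvelGroup]

end Rack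

theorem stmt_15_general {X : Type*} [Quandle X] {A : Type*} [AddCommGroup A]
    (hind : ∀ x y : X, ∃ g : EnvelGroup X, envelAction g x = y)
    (hfree : ∀ n ∈ commutator (EnvelGroup X), (∃ y : X, envelAction n y = y) → n = 1)
    (q : X → X → A)
    (hq : ∀ x y z : X, q (x ◃ y) (x ◃ z) + q x z = q x (y ◃ z) + q y z) :
    ∃ (a : A) (γ : X → A), ∀ x y : X, q x y = a + γ (x ◃ y) - γ y := by
  rcases isEmpty_or_nonempty X with hX | ⟨⟨x₀⟩⟩
  · exact ⟨0, 0, isEmptyElim⟩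
  replace hq : IsCocycle q := hq
  set a := q x₀ x₀
  let c (g : EnvelGroup X) : A :=
    (cocycleLift hq g).fn x₀ - Multiplicative.toAdd (envelDegree X g) • a
  obtain ⟨γ, hγ⟩ := exists_forall_eq_of_stabilizer_invariant envelAction x₀ (hind x₀) c
    fun g s hs => by
      simp only [c]
      rw [cocycleLift_mul_fn, hs, cocycleLift_fn_of_fixed hq x₀ (hind x₀) hfree hs, map_mul,
        toAdd_mul, add_zsmul]
      abel
  refine ⟨a, γ, fun x y => ?_⟩
  obtain ⟨g, rfl⟩ := hind x₀ y
  have hxy := hγ (toEnvelGroup X x * g)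
  rw [map_mul, Equiv.Perm.mul_apply, envelAction_prop] at hxy
  rw [hxy, hγ]
  simp only [c]
  rw [cocycleLift_mul_fn, cocycleLift_toEnvelGroup, map_mul, envelDegree_toEnvelGroup, toAdd_mul,
    toAdd_ofAdd, add_zsmul, one_zsmul]
  abel

/-- if the commutator subgroup `[G_X, G_X]` acts freely (hence regularly) on
the finite indecomposable quandle `X`, then every rack 2-cocycle with values in an abelian
group `A` (trivial action) is cohomologous to a constant cocycle; equivalently
`H²(X, ℂˣ) ≅ ℂˣ`. -/
theorem stmt_15 {X : Type*} [Quandle X] [Fintype X] {A : Type*} [AddCommGroup A]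
    (hind : ∀ x y : X, ∃ g : EnvelGroup X, envelAction g x = y)
    (hfree : ∀ n ∈ commutator (EnvelGroup X), (∃ y : X, envelAction n y = y) → n = 1)
    (q : X → X → A)
    (hq : ∀ x y z : X, q (x ◃ y) (x ◃ z) + q x z = q x (y ◃ z) + q y z) :
    ∃ (a : A) (γ : X → A), ∀ x y : X, q x y = a + γ (x ◃ y) - γ y :=
  stmt_15_general hind hfree q hq
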